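/- arXiv:1409.0995 — 6 statements merged into one kernel-verified Lean document; each statement's English description precedes it below -/
import Mathlib

section
/- Let (n_k) be a strictly increasing sequence of positive integers with positive upper density δ. Then there exists a map φ: ℕ → ℕ such that for every strictly increasing sequence (k_s) of positive integers, the set {n_k : k ∈ ⋃_s [k_s, k_s + φ(k_s)]} has upper density equal to δ. -/
/-!
Choose `φ m` to be a scale `N ≥ m (m + 1)` at which `range n` has counting ratio within
`1 / (m + 1)` of `δ`. Since `j ≤ n j`, every index `j ≥ m` with `n j ≤ N` lies in `[m, m + N]`,
so the block `[m, m + φ m]` starting at `m = k s` misses at most `m` elements of `range n ∩ [0, N]`,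
which costs at most `m / (N + 1) ≤ 1 / (m + 1)` in the ratio. Letting `s → ∞` gives density `≥ δ`.
-/

/-- The upper density of a set of natural numbers:
`limsup_N #(A ∩ [0,N]) / (N+1)`. -/
noncomputable def upperDensity (A : Set ℕ) : ℝ :=
  Filter.atTop.limsup (fun N : ℕ => ((A ∩ Set.Iic N).ncard : ℝ) / (N + 1))

open Filter Set Topology

noncomputable def countingRatio (A : Set ℕ) (N : ℕ) : ℝ :=
  ((A ∩ Iic N).ncard : ℝ) / (N + 1)

lemma upperDensity_eq_limsup_countingRatio (A : Set ℕ) :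
    upperDensity A = limsup (countingRatio A) atTop :=
  rfl

lemma countingRatio_nonneg (A : Set ℕ) (N : ℕ) : 0 ≤ countingRatio A N := by
  unfold countingRatio
  positivity

lemma countingRatio_le_one (A : Set ℕ) (N : ℕ) : countingRatio A N ≤ 1 := by
  rw [countingRatio, div_le_one (by positivity)]
  have hIic : (Iic N).ncard = N + 1 := by simp [ncard_eq_toFinset_card']
  exact_mod_cast hIic ▸ ncard_le_ncard inter_subset_right (finite_Iic N)

lemma countingRatio_mono {A B : Set ℕ} (hAB : A ⊆ B) (N : ℕ) :
    countingRatio A N ≤ countingRatio B N := by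
  unfold countingRatio
  gcongr
  exact (finite_Iic N).subset inter_subset_right

lemma isBoundedUnder_le_countingRatio (A : Set ℕ) :
    IsBoundedUnder (· ≤ ·) atTop (countingRatio A) :=
  isBoundedUnder_of ⟨1, countingRatio_le_one A⟩

lemma isCoboundedUnder_le_countingRatio (A : Set ℕ) (l : Filter ℕ) [l.NeBot] :
    IsCoboundedUnder (· ≤ ·) l (countingRatio A) :=
  (isBoundedUnder_of ⟨0, countingRatio_nonneg A⟩).isCoboundedUnder_le

lemma upperDensity_mono {A B : Set ℕ} (hAB : A ⊆ B) : upperDensity A ≤ upperDensity B :=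
  limsup_le_limsup (Eventually.of_forall (countingRatio_mono hAB))
    (isCoboundedUnder_le_countingRatio A atTop) (isBoundedUnder_le_countingRatio B)

lemma le_upperDensity_of_tendsto {A : Set ℕ} {N : ℕ → ℕ} {g : ℕ → ℝ} {x : ℝ}
    (hN : Tendsto N atTop atTop) (hg : Tendsto g atTop (𝓝 x))
    (hgA : ∀ s, g s ≤ countingRatio A (N s)) : x ≤ upperDensity A :=
  calc x = limsup g atTop := hg.limsup_eq.symm
    _ ≤ limsup (countingRatio A ∘ N) atTop :=
      limsup_le_limsup (Eventually.of_forall hgA) hg.isBoundedUnder_ge.isCoboundedUnder_le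
        (isBoundedUnder_of ⟨1, fun s => countingRatio_le_one A (N s)⟩)
    _ = limsup (countingRatio A) (map N atTop) := limsup_comp _ _ _
    _ ≤ upperDensity A := limsup_le_limsup_of_le hN
      (isCoboundedUnder_le_countingRatio A _) (isBoundedUnder_le_countingRatio A)

lemma exists_le_countingRatio_gt {A : Set ℕ} {δ : ℝ} (hA : upperDensity A = δ) (m : ℕ) :
    ∃ N, m * (m + 1) ≤ N ∧ δ - 1 / (m + 1) < countingRatio A N := by
  have hlt : δ - 1 / (m + 1) < limsup (countingRatio A) atTop := by
    rw [← upperDensity_eq_limsup_countingRatio, hA]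
    have : (0 : ℝ) < 1 / (m + 1) := by positivity
    linarith
  exact frequently_atTop.mp
    (frequently_lt_of_lt_limsup (isCoboundedUnder_le_countingRatio A atTop) hlt) _

lemma ncard_range_inter_Iic_le {n : ℕ → ℕ} (hn : StrictMono n) {m N : ℕ} {U : Set ℕ}
    (hU : Icc m (m + N) ⊆ U) :
    (range n ∩ Iic N).ncard ≤ (n '' U ∩ Iic N).ncard + m := by
  have hcover : range n ∩ Iic N ⊆ (n '' U ∩ Iic N) ∪ n '' Iio m := by
    rintro _ ⟨⟨j, rfl⟩, hj⟩
    rcases lt_or_ge j m with hjm | hjm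
    · exact Or.inr ⟨j, hjm, rfl⟩
    · have hjN : j ≤ N := (hn.le_apply (x := j)).trans hj
      exact Or.inl ⟨⟨j, hU ⟨hjm, by omega⟩, rfl⟩, hj⟩
  have hIio : (n '' Iio m).ncard ≤ m :=
    calc (n '' Iio m).ncard ≤ (Iio m).ncard := ncard_image_le (finite_Iio m)
      _ = m := by simp [ncard_eq_toFinset_card']
  calc (range n ∩ Iic N).ncard ≤ ((n '' U ∩ Iic N) ∪ n '' Iio m).ncard :=
        ncard_le_ncard hcover
          (((finite_Iic N).subset inter_subset_right).union ((finite_Iio m).image n))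
    _ ≤ (n '' U ∩ Iic N).ncard + (n '' Iio m).ncard := ncard_union_le _ _
    _ ≤ (n '' U ∩ Iic N).ncard + m := by omega

lemma countingRatio_range_sub_le {n : ℕ → ℕ} (hn : StrictMono n) {m N : ℕ} {U : Set ℕ}
    (hU : Icc m (m + N) ⊆ U) :
    countingRatio (range n) N - m / (N + 1) ≤ countingRatio (n '' U) N := by
  rw [countingRatio, countingRatio, sub_le_iff_le_add, ← add_div,
    div_le_div_iff_of_pos_right (by positivity)]
  exact_mod_cast ncard_range_inter_Iic_le hn hU

lemma sub_two_div_lt_countingRatio_image {n : ℕ → ℕ} (hn : StrictMono n) {m N : ℕ}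
    {U : Set ℕ} {x : ℝ} (hN : m * (m + 1) ≤ N)
    (hx : x - 1 / (m + 1) < countingRatio (range n) N) (hU : Icc m (m + N) ⊆ U) :
    x - 2 / (m + 1) < countingRatio (n '' U) N := by
  have hloss : (m : ℝ) / (N + 1) ≤ 1 / (m + 1) := by
    rw [div_le_div_iff₀ (by positivity) (by positivity)]
    have : (m : ℝ) * (m + 1) ≤ N := by exact_mod_cast hN
    linarith
  have hsplit : (2 : ℝ) / (m + 1) = 1 / (m + 1) + 1 / (m + 1) := by ring
  have := countingRatio_range_sub_le hn hU
  linarith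

theorem stmt0_general (n : ℕ → ℕ) (hmono : StrictMono n)
    (δ : ℝ) (hdens : upperDensity (Set.range n) = δ) :
    ∃ φ : ℕ → ℕ, ∀ k : ℕ → ℕ, StrictMono k → (∀ s, 0 < k s) →
      upperDensity (n '' (⋃ s, Set.Icc (k s) (k s + φ (k s)))) = δ := by
  choose φ hφ_ge hφ_lt using exists_le_countingRatio_gt hdens
  refine ⟨φ, fun k hk _ => le_antisymm ?_ ?_⟩
  · exact hdens ▸ upperDensity_mono (image_subset_range _ _)
  · have hk_le_φ : ∀ s, k s ≤ φ (k s) := fun s =>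
      (Nat.le_mul_of_pos_right _ (Nat.succ_pos _)).trans (hφ_ge _)
    have hk_real : Tendsto (fun s => (k s : ℝ) + 1) atTop atTop :=
      tendsto_atTop_add_const_right _ _ (tendsto_natCast_atTop_atTop.comp hk.tendsto_atTop)
    refine le_upperDensity_of_tendsto (N := φ ∘ k) (g := fun s => δ - 2 / (k s + 1))
      (tendsto_atTop_mono hk_le_φ hk.tendsto_atTop) ?_ fun s => ?_
    · simpa using tendsto_const_nhds.sub (tendsto_const_nhds.div_atTop hk_real)
    · exact (sub_two_div_lt_countingRatio_image hmono (hφ_ge _) (hφ_lt _)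
        (subset_iUnion_of_subset s subset_rfl)).le

/-- If `(n_k)` is a strictly increasing sequence of positive integers with positive upper
density `δ`, then there is `φ : ℕ → ℕ` such that for every strictly increasing sequence
`(k_s)` of positive integers, the set `{n_k : k ∈ ⋃_s [k_s, k_s + φ(k_s)]}` has upper
density equal to `δ`. -/
theorem stmt0 (n : ℕ → ℕ) (hmono : StrictMono n) (hpos : ∀ k, 0 < n k)
    (δ : ℝ) (hδpos : 0 < δ) (hdens : upperDensity (Set.range n) = δ) :
    ∃ φ : ℕ → ℕ, ∀ k : ℕ → ℕ, StrictMono k → (∀ s, 0 < k s) →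
      upperDensity (n '' (⋃ s, Set.Icc (k s) (k s + φ (k s)))) = δ :=
  stmt0_general n hmono δ hdens
end

section
/- Let (n_k)_{k≥1} be a strictly increasing sequence of non-negative integers with positive upper density, and let A ⊆ ℕ be a set of positive lower density. Then the set {n_k : k ∈ A} has positive upper density. -/
/-- The lower density of a set of natural numbers. -/
noncomputable def lowerDensity (A : Set ℕ) : ℝ :=
  Filter.atTop.liminf (fun N : ℕ => ((A ∩ Set.Iic N).ncard : ℝ) / (N + 1))

lemma ncard_Iic (N : ℕ) : (Set.Iic N).ncard = N + 1 := by
  rw [← Finset.coe_Iic, Set.ncard_coe_finset, Nat.card_Iic]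

lemma density_fun_nonneg (A : Set ℕ) (N : ℕ) :
    0 ≤ ((A ∩ Set.Iic N).ncard : ℝ) / (N + 1) := by positivity

lemma density_fun_le_one (A : Set ℕ) (N : ℕ) :
    ((A ∩ Set.Iic N).ncard : ℝ) / (N + 1) ≤ 1 := by
  rw [div_le_one (by positivity)]
  have h : (A ∩ Set.Iic N).ncard ≤ N + 1 := by
    calc (A ∩ Set.Iic N).ncard ≤ (Set.Iic N).ncard :=
      Set.ncard_le_ncard Set.inter_subset_right (Set.finite_Iic N)
    _ = N + 1 := ncard_Iic N
  exact_mod_cast h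

/-- If `(n_k)` is a strictly increasing sequence of non-negative integers with positive
upper density and `A ⊆ ℕ` has positive lower density, then `{n_k : k ∈ A}` has positive
upper density. -/
theorem stmt1 (n : ℕ → ℕ) (hmono : StrictMono n)
    (hupper : 0 < upperDensity (Set.range n))
    (A : Set ℕ) (hA : 0 < lowerDensity A) :
    0 < upperDensity (n '' A) := by
  classical
  set δ : ℝ := upperDensity (Set.range n) with hδ
  set α : ℝ := lowerDensity A with hα
  -- boundedness facts
  have hbdd : ∀ B : Set ℕ, Filter.IsBoundedUnder (· ≤ ·) Filter.atTop
      (fun N : ℕ => ((B ∩ Set.Iic N).ncard : ℝ) / (N + 1)) := by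
    intro B
    exact Filter.isBoundedUnder_of ⟨1, fun N => density_fun_le_one B N⟩
  have hbdd' : ∀ B : Set ℕ, Filter.IsBoundedUnder (· ≥ ·) Filter.atTop
      (fun N : ℕ => ((B ∩ Set.Iic N).ncard : ℝ) / (N + 1)) := by
    intro B
    exact Filter.isBoundedUnder_of ⟨0, fun N => density_fun_nonneg B N⟩
  -- frequently the range has many elements
  have hfreq : ∃ᶠ N in Filter.atTop,
      δ / 2 < ((Set.range n ∩ Set.Iic N).ncard : ℝ) / (N + 1) :=
    Filter.frequently_lt_of_lt_limsup ((hbdd' _).isCoboundedUnder_le)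
      (show δ/2 < upperDensity (Set.range n) by linarith)
  -- eventually A has many elements
  have hev : ∀ᶠ M in Filter.atTop,
      α / 2 < ((A ∩ Set.Iic M).ncard : ℝ) / (M + 1) :=
    Filter.eventually_lt_of_lt_liminf (show α/2 < lowerDensity A by linarith) (hbdd' _)
  obtain ⟨M₀, hM₀⟩ := Filter.eventually_atTop.1 hev
  -- choose N₁ large enough
  obtain ⟨N₁, hN₁⟩ := exists_nat_ge (((M₀ : ℝ) + 1) / (δ / 2))
  have hδ2 : (0:ℝ) < δ / 2 := by linarith
  -- key frequent bound
  have hkey : ∃ᶠ N in Filter.atTop,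
      α / 2 * (δ / 2) ≤ ((n '' A ∩ Set.Iic N).ncard : ℝ) / (N + 1) := by
    have := hfreq.and_eventually (Filter.eventually_ge_atTop N₁)
    refine this.mono ?_
    rintro N ⟨hNf, hNge⟩
    -- number of range elements below N
    have hcard : (δ / 2) * (N + 1) < ((Set.range n ∩ Set.Iic N).ncard : ℝ) := by
      have hpos : (0:ℝ) < (N:ℝ) + 1 := by positivity
      rw [lt_div_iff₀ hpos] at hNf
      linarith
    -- the set {k | n k ≤ N} is an initial segment Iic m'
    set m' := Nat.findGreatest (fun k => n k ≤ N) N with hm'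
    have hwit : ∃ k, n k ≤ N := by
      by_contra h
      push_neg at h
      have : Set.range n ∩ Set.Iic N = ∅ := by
        ext x; simp only [Set.mem_inter_iff, Set.mem_range, Set.mem_Iic, Set.mem_empty_iff_false,
          iff_false, not_and]
        rintro ⟨k, rfl⟩
        exact not_le.2 (h k)
      rw [this] at hcard
      simp at hcard
      nlinarith
    obtain ⟨k₀, hk₀⟩ := hwit
    have hk₀N : k₀ ≤ N := le_trans (hmono.le_apply) hk₀
    have hspec : n m' ≤ N := Nat.findGreatest_spec (P := fun k => n k ≤ N) hk₀N hk₀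
    have hmax : ∀ k, n k ≤ N → k ≤ m' := fun k hk =>
      Nat.le_findGreatest (le_trans hmono.le_apply hk) hk
    have hseg : Set.range n ∩ Set.Iic N = n '' Set.Iic m' := by
      ext x
      simp only [Set.mem_inter_iff, Set.mem_range, Set.mem_Iic, Set.mem_image]
      constructor
      · rintro ⟨⟨k, rfl⟩, hx⟩
        exact ⟨k, hmax k hx, rfl⟩
      · rintro ⟨k, hk, rfl⟩
        exact ⟨⟨k, rfl⟩, le_trans (hmono.monotone hk) hspec⟩
    have hcard_eq : (Set.range n ∩ Set.Iic N).ncard = m' + 1 := by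
      rw [hseg, Set.ncard_image_of_injective _ hmono.injective, ncard_Iic]
    rw [hcard_eq] at hcard
    push_cast at hcard
    -- m' is large
    have hm'large : M₀ ≤ m' := by
      have h1 : ((M₀:ℝ) + 1) ≤ (δ / 2) * ((N:ℝ) + 1) := by
        rw [div_le_iff₀ hδ2] at hN₁
        have : (N₁ : ℝ) ≤ (N : ℝ) := by exact_mod_cast hNge
        nlinarith
      have : (M₀ : ℝ) < (m' : ℝ) + 1 - 1 + 1 := by linarith
      have : (M₀ : ℝ) < (m' : ℝ) + 1 := by linarith
      exact_mod_cast Nat.lt_succ_iff.1 (by exact_mod_cast this)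
    -- many elements of A up to m'
    have hAcard := hM₀ m' hm'large
    have hm'pos : (0:ℝ) < (m':ℝ) + 1 := by positivity
    rw [lt_div_iff₀ hm'pos] at hAcard
    -- image bound
    have hsub : n '' (A ∩ Set.Iic m') ⊆ n '' A ∩ Set.Iic N := by
      rintro x ⟨k, ⟨hkA, hkm⟩, rfl⟩
      exact ⟨⟨k, hkA, rfl⟩, le_trans (hmono.monotone hkm) hspec⟩
    have hfin : (n '' A ∩ Set.Iic N).Finite :=
      Set.Finite.subset (Set.finite_Iic N) Set.inter_subset_right
    have hle : (A ∩ Set.Iic m').ncard ≤ (n '' A ∩ Set.Iic N).ncard := by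
      calc (A ∩ Set.Iic m').ncard
          = (n '' (A ∩ Set.Iic m')).ncard :=
            (Set.ncard_image_of_injective _ hmono.injective).symm
        _ ≤ (n '' A ∩ Set.Iic N).ncard := Set.ncard_le_ncard hsub hfin
    have hleR : ((A ∩ Set.Iic m').ncard : ℝ) ≤ ((n '' A ∩ Set.Iic N).ncard : ℝ) := by
      exact_mod_cast hle
    -- put everything together
    have hpos : (0:ℝ) < (N:ℝ) + 1 := by positivity
    rw [le_div_iff₀ hpos]
    have hα2 : (0:ℝ) < α / 2 := by linarith
    calc α / 2 * (δ / 2) * ((N:ℝ) + 1) = α / 2 * ((δ / 2) * ((N:ℝ) + 1)) := by ring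
      _ ≤ α / 2 * ((m':ℝ) + 1) := by nlinarith
      _ ≤ ((A ∩ Set.Iic m').ncard : ℝ) := le_of_lt hAcard
      _ ≤ ((n '' A ∩ Set.Iic N).ncard : ℝ) := hleR
  have hfinal : α / 2 * (δ / 2) ≤ upperDensity (n '' A) :=
    Filter.le_limsup_of_frequently_le hkey (hbdd _)
  have : (0:ℝ) < α / 2 * (δ / 2) := by positivity
  linarith
end

section
/- Let ∑_k δ_k be a divergent series of positive real numbers. Then there exists a map φ: ℕ → ℕ such that for every strictly increasing sequence (k_s) of positive integers, setting I = ⋃_s [k_s, k_s + φ(k_s)], one has ∑_{j ∈ I} δ_j = ∞. -/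
/-!
Since the partial sums of `δ` tend to infinity, every tail of the series has a finite block
`[n, n + φ n]` of mass at least `1`; let `φ n` be such a length. Given `(k_s)`, greedily pick
indices `s₀ < s₁ < …` with `k_{s_{m+1}}` beyond the block starting at `k_{s_m}`: these blocks
are disjoint, lie in `I`, and each carries mass `≥ 1`, so the series over `I` diverges.
-/

open Finset Function

theorem exists_le_sum_Icc_of_not_summable {f : ℕ → ℝ} (hf : ∀ j, 0 ≤ f j)
    (hdiv : ¬ Summable f) (c : ℝ) (n : ℕ) : ∃ p, c ≤ ∑ j ∈ Icc n (n + p), f j := by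
  have htend := (not_summable_iff_tendsto_nat_atTop_of_nonneg hf).mp hdiv
  obtain ⟨p, hp⟩ := (htend.eventually_ge_atTop (c + ∑ j ∈ range n, f j)).exists_forall_of_atTop
  refine ⟨p, ?_⟩
  have hsplit := sum_range_add_sum_Ico f (Nat.le_add_right n p)
  have hIco : ∑ j ∈ Ico n (n + p), f j ≤ ∑ j ∈ Icc n (n + p), f j :=
    sum_le_sum_of_subset_of_nonneg Ico_subset_Icc_self fun j _ _ => hf j
  linarith [hp (n + p) (Nat.le_add_left p n)]

theorem not_summable_of_pairwise_disjoint_of_le_sum {f : ℕ → ℝ} (hf : ∀ j, 0 ≤ f j)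
    {B : ℕ → Finset ℕ} (hB : Pairwise (Disjoint on B)) {ε : ℝ} (hε : 0 < ε)
    (hblock : ∀ m, ε ≤ ∑ j ∈ B m, f j) : ¬ Summable f := by
  intro hsum
  obtain ⟨M, hM⟩ := exists_nat_gt ((∑' j, f j) / ε)
  have hle : M * ε ≤ ∑' j, f j :=
    calc M * ε = ∑ _m ∈ range M, ε := by simp
      _ ≤ ∑ m ∈ range M, ∑ j ∈ B m, f j := sum_le_sum fun m _ => hblock m
      _ = ∑ j ∈ (range M).biUnion B, f j := (sum_biUnion (hB.set_pairwise _)).symm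
      _ ≤ ∑' j, f j := hsum.sum_le_tsum _ fun j _ => hf j
  rw [div_lt_iff₀ hε] at hM
  linarith

theorem pairwise_disjoint_Icc_of_lt_succ {a b : ℕ → ℕ} (hab : ∀ m, a m ≤ b m)
    (hba : ∀ m, b m < a (m + 1)) : Pairwise (Disjoint on fun m => Icc (a m) (b m)) := by
  have ha : StrictMono a := strictMono_nat_of_lt_succ fun m => (hab m).trans_lt (hba m)
  refine (pairwise_disjoint_on _).mpr fun m n hmn => disjoint_left.mpr fun j hjm hjn => ?_
  rw [mem_Icc] at hjm hjn
  have := ha.monotone (Nat.succ_le_of_lt hmn)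
  linarith [hba m]

theorem StrictMono.exists_seq_lt_apply_succ {k : ℕ → ℕ} (hk : StrictMono k) (L : ℕ → ℕ) :
    ∃ t : ℕ → ℕ, ∀ m, L (t m) < k (t (m + 1)) := by
  let t : ℕ → ℕ := fun m => Nat.rec 0 (fun _ i => L i + 1) m
  exact ⟨t, fun m => Nat.lt_of_succ_le (hk.le_apply (x := t (m + 1)))⟩

/-- If `∑ δ_k` is a divergent series of positive reals, there exists `φ : ℕ → ℕ` such
that for every strictly increasing sequence `(k_s)` of positive integers, the series
restricted to `I = ⋃_s [k_s, k_s + φ(k_s)]` still diverges. -/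
theorem stmt3 (δ : ℕ → ℝ) (hpos : ∀ k, 0 < δ k) (hdiv : ¬ Summable δ) :
    ∃ φ : ℕ → ℕ, ∀ k : ℕ → ℕ, StrictMono k → (∀ s, 0 < k s) →
      ¬ Summable (Set.indicator (⋃ s, Set.Icc (k s) (k s + φ (k s))) δ) := by
  have hnn : ∀ j, 0 ≤ δ j := fun j => (hpos j).le
  choose φ hφ using exists_le_sum_Icc_of_not_summable hnn hdiv 1
  refine ⟨φ, fun k hk _ => ?_⟩
  obtain ⟨t, ht⟩ := hk.exists_seq_lt_apply_succ fun i => k i + φ (k i)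
  refine not_summable_of_pairwise_disjoint_of_le_sum (Set.indicator_nonneg fun j _ => hnn j)
    (pairwise_disjoint_Icc_of_lt_succ (a := fun m => k (t m)) (fun m => Nat.le_add_right _ _) ht)
    one_pos fun m => ?_
  calc (1 : ℝ) ≤ ∑ j ∈ Icc (k (t m)) (k (t m) + φ (k (t m))), δ j := hφ _
    _ = _ := sum_congr rfl fun j hj =>
      (Set.indicator_of_mem (Set.mem_iUnion.mpr ⟨t m, mem_Icc.mp hj⟩) δ).symm
end

section
/- Let (w_n)_{n∈ℤ} be a bounded sequence of non-zero complex weights such that ∑_{n≤0} |w_0 w_{−1} ⋯ w_n|^p < ∞ for some 1 ≤ p < ∞. Then for every positive integer k_0 there exists k_1 ≥ k_0 such that ∏_{ν=0}^{n} |w_{−k_1−ν}| ≤ 1 for every n ≥ 0. -/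
/-! The partial products `a n = ∏_{ν ≤ n} |w_{-ν}|` are positive and, since `∑ a n ^ p < ∞`,
tend to `0`. Hence on `[k₀ - 1, ∞)` they attain a maximum, at some `j`. Taking `k₁ = j + 1`,
`a (j + 1 + n) = a j · ∏_{ν ≤ n} |w_{-k₁-ν}|` together with `a (j + 1 + n) ≤ a j` forces the
tail product to be at most `1`. -/

open Filter Topology Finset

theorem tendsto_zero_of_summable_rpow {a : ℕ → ℝ} (ha : ∀ n, 0 ≤ a n) {p : ℝ} (hp : 0 < p)
    (hsum : Summable fun n => a n ^ p) : Tendsto a atTop (𝓝 0) := by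
  have hlim := hsum.tendsto_atTop_zero.rpow_const (p := p⁻¹) (Or.inr (inv_nonneg.2 hp.le))
  rw [Real.zero_rpow (inv_ne_zero hp.ne')] at hlim
  simpa only [Real.rpow_rpow_inv (ha _) hp.ne'] using hlim

theorem exists_ge_forall_ge_le_of_tendsto {β : Type*} [LinearOrder β] [TopologicalSpace β]
    [OrderTopology β] {a : ℕ → β} {L : β} (ha : Tendsto a atTop (𝓝 L)) {m : ℕ}
    (hm : L < a m) : ∃ j, m ≤ j ∧ ∀ i, m ≤ i → a i ≤ a j := by
  obtain ⟨N, hN⟩ := eventually_atTop.1 (ha.eventually (gt_mem_nhds hm))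
  obtain ⟨j, hj, hmax⟩ := (Icc m (max N m)).exists_max_image a
    ⟨m, mem_Icc.2 ⟨le_rfl, le_max_right _ _⟩⟩
  refine ⟨j, (mem_Icc.1 hj).1, fun i hi => ?_⟩
  by_cases hiN : i ≤ max N m
  · exact hmax i (mem_Icc.2 ⟨hi, hiN⟩)
  · exact (hN i (by omega)).le.trans (hmax m (mem_Icc.2 ⟨le_rfl, le_max_right _ _⟩))

theorem prod_range_add_neg {M : Type*} [CommMonoid M] (f : ℤ → M) (k n : ℕ) :
    ∏ ν ∈ range (k + n), f (-(ν : ℤ)) =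
      (∏ ν ∈ range k, f (-(ν : ℤ))) * ∏ ν ∈ range n, f (-(k : ℤ) - ν) := by
  rw [prod_range_add]
  congr 2 with ν
  push_cast
  ring_nf

theorem stmt4_general (w : ℤ → ℂ)
    (hnz : ∀ n, w n ≠ 0) (p : ℝ) (hp : 1 ≤ p)
    (hsum : Summable (fun n : ℕ =>
      (∏ ν ∈ Finset.range (n + 1), ‖w (-(ν : ℤ))‖) ^ p)) :
    ∀ k₀ : ℕ, 0 < k₀ → ∃ k₁ : ℕ, k₀ ≤ k₁ ∧
      ∀ n : ℕ, ∏ ν ∈ Finset.range (n + 1), ‖w (-(k₁ : ℤ) - ν)‖ ≤ 1 := by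
  intro k₀ _
  set a : ℕ → ℝ := fun n => ∏ ν ∈ range (n + 1), ‖w (-(ν : ℤ))‖
  have ha_pos : ∀ n, 0 < a n := fun n => prod_pos fun ν _ => norm_pos_iff.2 (hnz _)
  have ha_lim : Tendsto a atTop (𝓝 0) :=
    tendsto_zero_of_summable_rpow (fun n => (ha_pos n).le) (by linarith) hsum
  obtain ⟨j, hj, hmax⟩ := exists_ge_forall_ge_le_of_tendsto ha_lim (ha_pos (k₀ - 1))
  refine ⟨j + 1, by omega, fun n => ?_⟩
  have hle : a (j + 1 + n) ≤ a j := hmax _ (by omega)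
  rw [show a (j + 1 + n) = a j * ∏ ν ∈ range (n + 1), ‖w (-((j + 1 : ℕ) : ℤ) - ν)‖ from
    prod_range_add_neg (‖w ·‖) (j + 1) (n + 1)] at hle
  exact (mul_le_iff_le_one_right (ha_pos j)).1 hle

/-- Let `(w_n)_{n ∈ ℤ}` be a bounded sequence of non-zero complex weights with
`∑_{n ≤ 0} |w_0 w_{-1} ⋯ w_n|^p < ∞` for some `1 ≤ p < ∞`. Then for every positive
integer `k₀` there is `k₁ ≥ k₀` with `∏_{ν=0}^{n} |w_{-k₁-ν}| ≤ 1` for every `n ≥ 0`. -/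
theorem stmt4 (w : ℤ → ℂ) (hb : ∃ C : ℝ, ∀ n, ‖w n‖ ≤ C)
    (hnz : ∀ n, w n ≠ 0) (p : ℝ) (hp : 1 ≤ p)
    (hsum : Summable (fun n : ℕ =>
      (∏ ν ∈ Finset.range (n + 1), ‖w (-(ν : ℤ))‖) ^ p)) :
    ∀ k₀ : ℕ, 0 < k₀ → ∃ k₁ : ℕ, k₀ ≤ k₁ ∧
      ∀ n : ℕ, ∏ ν ∈ Finset.range (n + 1), ‖w (-(k₁ : ℤ) - ν)‖ ≤ 1 :=
  stmt4_general w hnz p hp hsum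
end

section
/- Let B_w be a bilateral weighted backward shift on ℓ^p(ℤ) (1 ≤ p < ∞) with bounded weight sequence (w_n)_{n∈ℤ}, satisfying ∑_{n≤0} |w_0 ⋯ w_n|^p < ∞. Then there exists an infinite-dimensional closed subspace M_0 of ℓ^p(ℤ) such that ‖B_w^n x‖ → 0 for every x ∈ M_0. -/
/-!
Write `P N = |w_0 w_{-1} ⋯ w_{-N+1}|`; summability forces `P N → 0`, so infinitely many indices
`k` are peaks: `P m ≤ P k` for all `m ≥ k`. The coordinate of `B^n x` coming from `e_{-k}`
carries the factor `|w_{-k} ⋯ w_{-k-n+1}| = P (k + n) / P k`, which at a peak is at most `1`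
and tends to `0`. On the closed span of these `e_{-k}` the iterates are therefore dominated
coordinatewise by `x`, and they tend to `0` by dominated convergence in `ℓ^p`.
-/

open Filter Topology Finset
open scoped ENNReal

lemma tendsto_zero_of_tendsto_rpow {α : Type*} {l : Filter α} {f : α → ℝ} {t : ℝ}
    (hf : ∀ a, 0 ≤ f a) (ht : 0 < t) (h : Tendsto (fun a => f a ^ t) l (𝓝 0)) :
    Tendsto f l (𝓝 0) :=
  (h.rpow_const_nhds_zero (inv_pos.2 ht)).congr fun a => Real.rpow_rpow_inv (hf a) ht.ne'

lemma exists_ge_forall_ge_le_of_tendsto_zero {a : ℕ → ℝ} (hpos : ∀ n, 0 < a n)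
    (ha : Tendsto a atTop (𝓝 0)) (N : ℕ) : ∃ i ≥ N, ∀ m ≥ i, a m ≤ a i := by
  obtain ⟨M, hM⟩ := eventually_atTop.1
    ((ha.eventually (gt_mem_nhds (hpos N))).and (eventually_ge_atTop N))
  obtain ⟨i, hi, hmax⟩ := (Icc N M).exists_max_image a ⟨N, mem_Icc.2 ⟨le_rfl, (hM M le_rfl).2⟩⟩
  refine ⟨i, (mem_Icc.1 hi).1, fun m hm => ?_⟩
  rcases le_or_gt m M with hmM | hMm
  · exact hmax m (mem_Icc.2 ⟨(mem_Icc.1 hi).1.trans hm, hmM⟩)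
  · exact (hM m hMm.le).1.le.trans (hmax N (mem_Icc.2 ⟨le_rfl, (hM M le_rfl).2⟩))

lemma exists_strictMono_forall_ge_le_of_tendsto_zero {a : ℕ → ℝ} (hpos : ∀ n, 0 < a n)
    (ha : Tendsto a atTop (𝓝 0)) :
    ∃ φ : ℕ → ℕ, StrictMono φ ∧ ∀ j, ∀ m ≥ φ j, a m ≤ a (φ j) :=
  extraction_of_frequently_atTop <|
    frequently_atTop.2 (exists_ge_forall_ge_le_of_tendsto_zero hpos ha)

lemma prod_range_add_le_one {g : ℕ → ℝ} {K n : ℕ} (hK : 0 < ∏ ν ∈ range K, g ν)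
    (hle : ∏ ν ∈ range (K + n), g ν ≤ ∏ ν ∈ range K, g ν) :
    ∏ l ∈ range n, g (K + l) ≤ 1 := by
  rw [prod_range_add] at hle
  exact (mul_le_iff_le_one_right hK).1 hle

lemma tendsto_prod_range_add {g : ℕ → ℝ} (K : ℕ) (hK : ∏ ν ∈ range K, g ν ≠ 0)
    (h : Tendsto (fun N => ∏ ν ∈ range N, g ν) atTop (𝓝 0)) :
    Tendsto (fun n => ∏ l ∈ range n, g (K + l)) atTop (𝓝 0) := by
  have h' := ((tendsto_add_atTop_iff_nat K).2 h).div_const (∏ ν ∈ range K, g ν)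
  rw [zero_div] at h'
  refine h'.congr fun n => ?_
  rw [add_comm, prod_range_add, mul_div_cancel_left₀ _ hK]

section lp

variable {ι 𝕜 : Type*} [NormedField 𝕜] {p : ℝ≥0∞}

lemma lp.linearIndependent_single_one [DecidableEq ι] :
    LinearIndependent 𝕜 (fun i : ι => lp.single p i (1 : 𝕜)) :=
  LinearIndependent.of_comp (LinearMap.pi fun i => lp.evalₗ (𝕜 := 𝕜) (fun _ : ι => 𝕜) p i :
    lp (fun _ : ι => 𝕜) p →ₗ[𝕜] ι → 𝕜)
    (Pi.linearIndependent_single_one ι 𝕜)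

theorem lp.tendsto_norm_zero_of_dominated {E : Type*} [NormedAddCommGroup E]
    (hp : 0 < p.toReal) {f : ℕ → lp (fun _ : ι => E) p} (e : ℕ → ι ≃ ι)
    (y : lp (fun _ : ι => E) p) (hle : ∀ n i, ‖f n (e n i)‖ ≤ ‖y i‖)
    (hlim : ∀ i, Tendsto (fun n => ‖f n (e n i)‖) atTop (𝓝 0)) :
    Tendsto (fun n => ‖f n‖) atTop (𝓝 0) := by
  refine tendsto_zero_of_tendsto_rpow (fun _ => lp.norm_nonneg' _) hp ?_
  have hsum := tendsto_tsum_of_dominated_convergence ((lp.memℓp y).summable hp)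
    (fun i => (hlim i).rpow_const_nhds_zero hp) (Eventually.of_forall fun n i => by
      rw [Real.norm_of_nonneg (by positivity)]
      exact Real.rpow_le_rpow (norm_nonneg _) (hle n i) hp.le)
  rw [tsum_zero] at hsum
  refine hsum.congr fun n => ?_
  rw [lp.norm_rpow_eq_tsum hp, (e n).tsum_eq (fun i => ‖f n i‖ ^ p.toReal)]

variable [Fact (1 ≤ p)]

variable (p) in
/-- Equivalently, the closed span of the unit vectors `e i`, `i ∈ s`; the paper's `M₀` is the
case `s = {-k_j}`. -/
noncomputable def lpSupported (s : Set ι) : Submodule 𝕜 (lp (fun _ : ι => 𝕜) p) :=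
  ⨅ i ∈ sᶜ, LinearMap.ker (lp.evalCLM 𝕜 (fun _ : ι => 𝕜) p i : _ →ₗ[𝕜] 𝕜)

lemma mem_lpSupported {s : Set ι} {x : lp (fun _ : ι => 𝕜) p} :
    x ∈ lpSupported p s ↔ ∀ i ∉ s, x i = 0 := by
  simp [lpSupported, Submodule.mem_iInf, lp.evalCLM]

lemma isClosed_lpSupported (s : Set ι) :
    IsClosed (lpSupported (𝕜 := 𝕜) p s : Set (lp (fun _ : ι => 𝕜) p)) := by
  simp only [lpSupported, Submodule.coe_iInf]
  exact isClosed_iInter fun i => isClosed_iInter fun _ => ContinuousLinearMap.isClosed_ker _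

lemma not_finiteDimensional_lpSupported {s : Set ι} (hs : s.Infinite) :
    ¬ FiniteDimensional 𝕜 (lpSupported (𝕜 := 𝕜) p s) := by
  classical
  intro hfin
  have : Infinite s := hs.to_subtype
  refine Module.Finite.not_linearIndependent_of_infinite
    (fun i : s => (⟨lp.single p i (1 : 𝕜), mem_lpSupported.2 fun j hj => ?_⟩ :
      lpSupported p s)) (LinearIndependent.of_comp (lpSupported p s).subtype ?_)
  · exact lp.single_apply_ne p _ _ (ne_of_mem_of_not_mem i.2 hj).symm
  · exact (lp.linearIndependent_single_one (p := p)).comp _ Subtype.val_injective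

end lp

section WeightedShift

variable {𝕜 : Type*} [NormedField 𝕜] {p : ℝ≥0∞} [Fact (1 ≤ p)] {w : ℤ → 𝕜}
  {B : lp (fun _ : ℤ => 𝕜) p →L[𝕜] lp (fun _ : ℤ => 𝕜) p}

lemma weightedShift_pow_apply_sub (hB : ∀ x n, B x n = w (n + 1) * x (n + 1)) (n : ℕ)
    (x : lp (fun _ : ℤ => 𝕜) p) (k : ℤ) :
    (B ^ n) x (k - n) = (∏ l ∈ range n, w (k - l)) * x k := by
  induction n with
  | zero => simp
  | succ n ih =>
    rw [pow_succ', mul_apply_eq_comp, hB,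
      show k - ↑(n + 1) + 1 = k - n by push_cast; ring, ih, prod_range_succ]
    ring

lemma weightedShift_tendsto_zero (hp : p ≠ ∞) (hB : ∀ x n, B x n = w (n + 1) * x (n + 1))
    {x : lp (fun _ : ℤ => 𝕜) p}
    (hx : ∀ m, x m ≠ 0 → (∀ n, ∏ l ∈ range n, ‖w (m - l)‖ ≤ 1) ∧
      Tendsto (fun n => ∏ l ∈ range n, ‖w (m - l)‖) atTop (𝓝 0)) :
    Tendsto (fun n : ℕ => ‖(B ^ n) x‖) atTop (𝓝 0) := by
  have hcoord : ∀ (n : ℕ) m, ‖(B ^ n) x (Equiv.subRight (n : ℤ) m)‖ =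
      (∏ l ∈ range n, ‖w (m - l)‖) * ‖x m‖ := by
    intro n m
    rw [Equiv.subRight_apply, weightedShift_pow_apply_sub hB, norm_mul, norm_prod]
  refine lp.tendsto_norm_zero_of_dominated
    (ENNReal.toReal_pos (zero_lt_one.trans_le Fact.out).ne' hp)
    (fun n => Equiv.subRight (n : ℤ)) x (fun n m => ?_) (fun m => ?_) <;> simp only [hcoord]
  · by_cases hxm : x m = 0
    · simp [hxm]
    · exact mul_le_of_le_one_left (norm_nonneg _) ((hx m hxm).1 n)
  · by_cases hxm : x m = 0
    · simp [hxm]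
    · simpa using (hx m hxm).2.mul_const ‖x m‖

end WeightedShift

theorem stmt5_general (p : ℝ≥0∞) [Fact (1 ≤ p)] (hp : p ≠ ∞)
    (w : ℤ → ℂ) (hnz : ∀ n, w n ≠ 0)
    (hsum : Summable (fun n : ℕ =>
      (∏ ν ∈ Finset.range (n + 1), ‖w (-(ν : ℤ))‖) ^ p.toReal))
    (B : lp (fun _ : ℤ => ℂ) p →L[ℂ] lp (fun _ : ℤ => ℂ) p)
    (hB : ∀ (x : lp (fun _ : ℤ => ℂ) p) (n : ℤ),
      (B x : ∀ _ : ℤ, ℂ) n = w (n + 1) * (x : ∀ _ : ℤ, ℂ) (n + 1)) :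
    ∃ M₀ : Submodule ℂ (lp (fun _ : ℤ => ℂ) p),
      IsClosed (M₀ : Set (lp (fun _ : ℤ => ℂ) p)) ∧ ¬ FiniteDimensional ℂ M₀ ∧
      ∀ x ∈ M₀, Filter.Tendsto (fun n : ℕ => ‖(B ^ n) x‖) Filter.atTop (nhds 0) := by
  have ht : 0 < p.toReal := ENNReal.toReal_pos (zero_lt_one.trans_le Fact.out).ne' hp
  set g : ℕ → ℝ := fun ν => ‖w (-ν)‖
  have hPpos : ∀ N, 0 < ∏ ν ∈ range N, g ν := fun N => prod_pos fun ν _ => norm_pos_iff.2 (hnz _)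
  have hPlim : Tendsto (fun N => ∏ ν ∈ range N, g ν) atTop (𝓝 0) :=
    (tendsto_add_atTop_iff_nat 1).1 <|
      tendsto_zero_of_tendsto_rpow (fun _ => (hPpos _).le) ht hsum.tendsto_atTop_zero
  obtain ⟨k, hk_mono, hk_peak⟩ := exists_strictMono_forall_ge_le_of_tendsto_zero hPpos hPlim
  refine ⟨lpSupported p (Set.range fun j => -(k j : ℤ)), isClosed_lpSupported _,
    not_finiteDimensional_lpSupported (Set.infinite_range_of_injective
      (neg_injective.comp (Nat.cast_injective.comp hk_mono.injective))),
    fun x hx => weightedShift_tendsto_zero hp hB fun m hxm => ?_⟩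
  obtain ⟨j, rfl⟩ : m ∈ Set.range fun j => -(k j : ℤ) :=
    by_contra fun h => hxm (mem_lpSupported.1 hx m h)
  have hg : ∀ l : ℕ, ‖w (-(k j : ℤ) - l)‖ = g (k j + l) := fun l => by
    simp only [g, Nat.cast_add, neg_add]; rfl
  simp only [hg]
  exact ⟨fun n => prod_range_add_le_one (hPpos _) (hk_peak j _ (Nat.le_add_right _ _)),
    tendsto_prod_range_add _ (hPpos _).ne' hPlim⟩

/-- Let `B_w` be a bilateral weighted backward shift on `ℓ^p(ℤ)` (`1 ≤ p < ∞`) with a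
bounded weight sequence `(w_n)_{n ∈ ℤ}` of non-zero weights, satisfying
`∑_{n ≤ 0} |w_0 ⋯ w_n|^p < ∞`. Then there exists an infinite-dimensional closed subspace
`M₀` of `ℓ^p(ℤ)` such that `‖B_w^n x‖ → 0` for every `x ∈ M₀`. -/
theorem stmt5 (p : ℝ≥0∞) [Fact (1 ≤ p)] (hp : p ≠ ∞)
    (w : ℤ → ℂ) (hb : ∃ C : ℝ, ∀ n, ‖w n‖ ≤ C) (hnz : ∀ n, w n ≠ 0)
    (hsum : Summable (fun n : ℕ =>
      (∏ ν ∈ Finset.range (n + 1), ‖w (-(ν : ℤ))‖) ^ p.toReal))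
    (B : lp (fun _ : ℤ => ℂ) p →L[ℂ] lp (fun _ : ℤ => ℂ) p)
    (hB : ∀ (x : lp (fun _ : ℤ => ℂ) p) (n : ℤ),
      (B x : ∀ _ : ℤ, ℂ) n = w (n + 1) * (x : ∀ _ : ℤ, ℂ) (n + 1)) :
    ∃ M₀ : Submodule ℂ (lp (fun _ : ℤ => ℂ) p),
      IsClosed (M₀ : Set (lp (fun _ : ℤ => ℂ) p)) ∧ ¬ FiniteDimensional ℂ M₀ ∧
      ∀ x ∈ M₀, Filter.Tendsto (fun n : ℕ => ‖(B ^ n) x‖) Filter.atTop (nhds 0) :=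
  stmt5_general p hp w hnz hsum B hB
end

section
/- Let X = ℓ^2 ⊕ ℓ^2 (Hilbert space direct sum) and let M be a closed infinite-dimensional subspace of X. Let P_1, P_2 be the coordinate projections. Then at least one of P_1(M), P_2(M) contains a closed infinite-dimensional subspace of ℓ^2. -/
/-!
Let `A`, `B` be the coordinate projections restricted to `M`, so `‖A x‖² + ‖B x‖² = ‖x‖²`, and
let `C = A†A`. With `f = (t - 1/4)⁺` and `g = (3/4 - t)⁺`, the operator `f(C) + g(C)` is
invertible, so `M` is spanned by the ranges of `f(C)` and `g(C)` and one of them is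
infinite-dimensional. On the range of `f(C)` we have `‖A x‖ ≥ ‖x‖/2`, on the range of `g(C)`
we have `‖B x‖ ≥ ‖x‖/2`, and a map bounded below on a subspace sends its closure onto a closed
subspace of the same dimension.
-/

open scoped InnerProductSpace NNReal
open RCLike

namespace Submodule

variable {𝕜 E F : Type*} [NontriviallyNormedField 𝕜]
  [NormedAddCommGroup E] [NormedSpace 𝕜 E] [NormedAddCommGroup F] [NormedSpace 𝕜 F]

def HasClosedInfiniteDimensionalSubmodule (S : Submodule 𝕜 F) : Prop :=
  ∃ N : Submodule 𝕜 F, IsClosed (N : Set F) ∧ ¬ FiniteDimensional 𝕜 N ∧ N ≤ S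

theorem HasClosedInfiniteDimensionalSubmodule.mono {S T : Submodule 𝕜 F}
    (hS : S.HasClosedInfiniteDimensionalSubmodule) (hST : S ≤ T) :
    T.HasClosedInfiniteDimensionalSubmodule :=
  let ⟨N, hNc, hNinf, hNS⟩ := hS
  ⟨N, hNc, hNinf, hNS.trans hST⟩

theorem hasClosedInfiniteDimensionalSubmodule_range_of_le_mul_norm [CompleteSpace E]
    (T : E →L[𝕜] F) {V : Submodule 𝕜 E} (hV : ¬ FiniteDimensional 𝕜 V) {c : ℝ≥0}
    (hc : ∀ x ∈ V, ‖x‖ ≤ c * ‖T x‖) :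
    (LinearMap.range (T : E →ₗ[𝕜] F)).HasClosedInfiniteDimensionalSubmodule := by
  set W := V.topologicalClosure
  have : CompleteSpace W := V.isClosed_topologicalClosure.completeSpace_coe
  have hcW : ∀ x ∈ W, ‖x‖ ≤ c * ‖T x‖ :=
    closure_minimal hc (isClosed_le continuous_norm (by fun_prop))
  set TW : W →L[𝕜] F := T.comp W.subtypeL
  have hTW : AntilipschitzWith c TW := TW.antilipschitz_of_bound fun x => hcW x x.2
  refine ⟨LinearMap.range (TW : W →ₗ[𝕜] F), ?_, fun hfin => hV ?_,
    LinearMap.range_comp_le_range (W.subtypeL : W →ₗ[𝕜] E) (T : E →ₗ[𝕜] F)⟩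
  · rw [LinearMap.coe_range]
    exact hTW.isClosed_range TW.uniformContinuous
  have : FiniteDimensional 𝕜 W :=
    (LinearEquiv.ofInjective (TW : W →ₗ[𝕜] F) hTW.injective).symm.finiteDimensional
  exact finiteDimensional_of_le V.le_topologicalClosure

end Submodule

section Spectral

variable {H : Type*} [NormedAddCommGroup H] [InnerProductSpace ℂ H] [CompleteSpace H]

theorem re_inner_cfc_le_of_mul_sq_le (C : H →L[ℂ] H) {f φ ψ : ℝ → ℝ}
    (hf : Continuous f) (hφ : Continuous φ) (hψ : Continuous ψ)
    (h : ∀ t, φ t * f t ^ 2 ≤ ψ t * f t ^ 2) (y : H) :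
    re ⟪cfc φ C (cfc f C y), cfc f C y⟫_ℂ ≤ re ⟪cfc ψ C (cfc f C y), cfc f C y⟫_ℂ := by
  -- `f(C) χ(C) f(C) = (χ f²)(C)`, and the functional calculus is monotone.
  have sandwich : ∀ χ : ℝ → ℝ, Continuous χ →
      cfc (fun t => f t * (χ t * f t)) C = cfc f C * (cfc χ C * cfc f C) := fun χ hχ => by
    rw [cfc_mul f _ C, cfc_mul χ f C]
  have hle : cfc (fun t => f t * (φ t * f t)) C ≤ cfc (fun t => f t * (ψ t * f t)) C :=
    cfc_mono fun t _ => by nlinarith [h t]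
  have hpos := ((ContinuousLinearMap.le_def _ _).mp hle).re_inner_nonneg_left y
  have hsymm : ∀ x z, ⟪cfc f C x, z⟫_ℂ = ⟪x, cfc f C z⟫_ℂ := (cfc_predicate f C).isSymmetric
  rw [sandwich φ hφ, sandwich ψ hψ, sub_apply, inner_sub_left, map_sub, sub_nonneg] at hpos
  simpa only [mul_apply_eq_comp, ContinuousLinearMap.comp_apply, hsymm] using hpos

theorem IsSelfAdjoint.exists_sup_eq_top_re_inner_bounds {C : H →L[ℂ] H} (hC : IsSelfAdjoint C)
    {a b : ℝ} (hab : a < b) :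
    ∃ V₁ V₂ : Submodule ℂ H, V₁ ⊔ V₂ = ⊤ ∧
      (∀ x ∈ V₁, a * ‖x‖ ^ 2 ≤ re ⟪C x, x⟫_ℂ) ∧ (∀ x ∈ V₂, re ⟪C x, x⟫_ℂ ≤ b * ‖x‖ ^ 2) := by
  set f : ℝ → ℝ := fun t => max (t - a) 0
  set g : ℝ → ℝ := fun t => max (b - t) 0
  have hf : Continuous f := by fun_prop
  have hg : Continuous g := by fun_prop
  have hconst : ∀ r x, re ⟪cfc (fun _ => r) C x, x⟫_ℂ = r * ‖x‖ ^ 2 := fun r x => by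
    simp [cfc_const r C, Algebra.algebraMap_eq_smul_one, ← Complex.ofReal_pow]
  refine ⟨LinearMap.range ((cfc f C : H →L[ℂ] H) : H →ₗ[ℂ] H),
    LinearMap.range ((cfc g C : H →L[ℂ] H) : H →ₗ[ℂ] H), ?_, ?_, ?_⟩
  · have hunit : IsUnit (cfc f C + cfc g C) := by
      rw [← cfc_add C f g, isUnit_cfc_iff _ C]
      intro t _
      have : b - a ≤ f t + g t := by
        linarith [le_max_left (t - a) 0, le_max_left (b - t) 0]
      linarith
    rw [eq_top_iff, ← LinearMap.range_eq_top.mpr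
      (ContinuousLinearMap.isUnit_iff_bijective.mp hunit).surjective]
    exact LinearMap.range_add_le _ _
  · rintro _ ⟨y, rfl⟩
    have := re_inner_cfc_le_of_mul_sq_le C (φ := fun _ => a) (ψ := fun t => t) hf
      continuous_const continuous_id' (fun t => ?_) y
    · simpa only [hconst, cfc_id' ℝ C, ContinuousLinearMap.coe_coe] using this
    · rcases le_total t a with ht | ht
      · simp [f, max_eq_right (sub_nonpos.mpr ht)]
      · exact mul_le_mul_of_nonneg_right ht (sq_nonneg _)
  · rintro _ ⟨y, rfl⟩
    have := re_inner_cfc_le_of_mul_sq_le C (φ := fun t => t) (ψ := fun _ => b) hg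
      continuous_id' continuous_const (fun t => ?_) y
    · simpa only [hconst, cfc_id' ℝ C, ContinuousLinearMap.coe_coe] using this
    · rcases le_total t b with ht | ht
      · exact mul_le_mul_of_nonneg_right ht (sq_nonneg _)
      · simp [g, max_eq_right (sub_nonpos.mpr ht)]

variable {F₁ F₂ : Type*} [NormedAddCommGroup F₁] [InnerProductSpace ℂ F₁] [CompleteSpace F₁]
  [NormedAddCommGroup F₂] [NormedSpace ℂ F₂]

theorem hasClosedInfiniteDimensionalSubmodule_range_or (A : H →L[ℂ] F₁) (B : H →L[ℂ] F₂)
    (hAB : ∀ x, ‖x‖ ^ 2 ≤ ‖A x‖ ^ 2 + ‖B x‖ ^ 2) (hH : ¬ FiniteDimensional ℂ H) :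
    (LinearMap.range (A : H →ₗ[ℂ] F₁)).HasClosedInfiniteDimensionalSubmodule ∨
      (LinearMap.range (B : H →ₗ[ℂ] F₂)).HasClosedInfiniteDimensionalSubmodule := by
  have hC : IsSelfAdjoint (A.adjoint ∘L A) := A.isPositive_adjoint_comp_self.isSelfAdjoint
  have hCA : ∀ x, re ⟪(A.adjoint ∘L A) x, x⟫_ℂ = ‖A x‖ ^ 2 := fun x => by
    rw [ContinuousLinearMap.comp_apply, ContinuousLinearMap.adjoint_inner_left,
      inner_self_eq_norm_sq]
  obtain ⟨V₁, V₂, hsup, hV₁, hV₂⟩ :=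
    hC.exists_sup_eq_top_re_inner_bounds (show (1 / 4 : ℝ) < 3 / 4 by norm_num)
  have hdich : ¬ FiniteDimensional ℂ V₁ ∨ ¬ FiniteDimensional ℂ V₂ := by
    by_contra! h
    obtain ⟨_, _⟩ := h
    have := Submodule.finiteDimensional_sup V₁ V₂
    rw [hsup] at this
    exact hH (Submodule.topEquiv.finiteDimensional)
  have two_mul_of_sq : ∀ {u v : ℝ}, 0 ≤ v → u ^ 2 ≤ 4 * v ^ 2 → u ≤ ((2 : ℝ≥0) : ℝ) * v :=
    fun hv h => by push_cast; nlinarith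
  rcases hdich with h | h
  · refine Or.inl (Submodule.hasClosedInfiniteDimensionalSubmodule_range_of_le_mul_norm A h
      fun x hx => two_mul_of_sq (norm_nonneg _) ?_)
    linarith [hV₁ x hx, hCA x]
  · refine Or.inr (Submodule.hasClosedInfiniteDimensionalSubmodule_range_of_le_mul_norm B h
      fun x hx => two_mul_of_sq (norm_nonneg _) ?_)
    linarith [hV₂ x hx, hCA x, hAB x]

end Spectral

theorem Submodule.hasClosedInfiniteDimensionalSubmodule_map_fst_or_map_snd
    {E F : Type*} [NormedAddCommGroup E] [InnerProductSpace ℂ E] [CompleteSpace E]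
    [NormedAddCommGroup F] [InnerProductSpace ℂ F] [CompleteSpace F]
    (M : Submodule ℂ (E × F)) (hM : IsClosed (M : Set (E × F))) (hMinf : ¬ FiniteDimensional ℂ M) :
    (M.map (LinearMap.fst ℂ E F)).HasClosedInfiniteDimensionalSubmodule ∨
      (M.map (LinearMap.snd ℂ E F)).HasClosedInfiniteDimensionalSubmodule := by
  -- `M` is given the Hilbert norm of `E ⊕ F` so that `‖x‖² = ‖x.1‖² + ‖x.2‖²` on it.
  let e : WithLp 2 (E × F) ≃L[ℂ] E × F := WithLp.prodContinuousLinearEquiv 2 ℂ E F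
  let M₂ : Submodule ℂ (WithLp 2 (E × F)) := M.comap (e : WithLp 2 (E × F) →ₗ[ℂ] E × F)
  have : CompleteSpace M₂ := (hM.preimage e.continuous).completeSpace_coe
  have hM₂inf : ¬ FiniteDimensional ℂ M₂ := fun h =>
    hMinf (LinearEquiv.ofSubmodule' e.toLinearEquiv M).finiteDimensional
  let ι : M₂ →L[ℂ] E × F := (e : WithLp 2 (E × F) →L[ℂ] E × F).comp M₂.subtypeL
  refine (hasClosedInfiniteDimensionalSubmodule_range_or ((ContinuousLinearMap.fst ℂ E F).comp ι)
    ((ContinuousLinearMap.snd ℂ E F).comp ι) (fun x => (WithLp.prod_norm_sq_eq_of_L2 x.1).le)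
    hM₂inf).imp (fun h => h.mono ?_) (fun h => h.mono ?_) <;>
  · rintro _ ⟨x, rfl⟩
    exact ⟨ι x, x.2, rfl⟩

/-- Let `X = ℓ² ⊕ ℓ²` and `M` a closed infinite-dimensional subspace of `X`.  Then at
least one of the coordinate projections `P₁(M)`, `P₂(M)` contains a closed
infinite-dimensional subspace of `ℓ²`. -/
theorem stmt14
    (M : Submodule ℂ (lp (fun _ : ℕ => ℂ) 2 × lp (fun _ : ℕ => ℂ) 2))
    (hclosed : IsClosed (M : Set (lp (fun _ : ℕ => ℂ) 2 × lp (fun _ : ℕ => ℂ) 2)))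
    (hinf : ¬ FiniteDimensional ℂ M) :
    (∃ N : Submodule ℂ (lp (fun _ : ℕ => ℂ) 2),
        IsClosed (N : Set (lp (fun _ : ℕ => ℂ) 2)) ∧ ¬ FiniteDimensional ℂ N ∧
        N ≤ M.map (LinearMap.fst ℂ (lp (fun _ : ℕ => ℂ) 2) (lp (fun _ : ℕ => ℂ) 2))) ∨
    (∃ N : Submodule ℂ (lp (fun _ : ℕ => ℂ) 2),
        IsClosed (N : Set (lp (fun _ : ℕ => ℂ) 2)) ∧ ¬ FiniteDimensional ℂ N ∧
        N ≤ M.map (LinearMap.snd ℂ (lp (fun _ : ℕ => ℂ) 2) (lp (fun _ : ℕ => ℂ) 2))) :=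
  M.hasClosedInfiniteDimensionalSubmodule_map_fst_or_map_snd hclosed hinf
end
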